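/- arXiv:0910.5430 — 4 statements merged into one kernel-verified Lean document; each statement's English description precedes it below -/
import Mathlib

section
/- Let A and R be commutative unital topological rings, let ε : A → R be a ring homomorphism such that every element of the kernel of ε is nilpotent, and let η : R → A be a continuous ring homomorphism with ε ∘ η = id_R. If the set of invertible elements of R is dense in R, then the set of invertible elements of A is dense in A. -/
/-! Every `a : A` is `η (ε a) + n` with `n := a - η (ε a)` in the kernel of `ε`, hence nilpotent.
The continuous map `r ↦ η r + n` sends `ε a` to `a` and units to units (a unit plus a nilpotent is a
unit), so it carries units of `R` accumulating at `ε a` to units of `A` accumulating at `a`. -/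

theorem RingHom.isNilpotent_sub_map_of_comp_eq_id {A R : Type*} [Ring A] [Ring R]
    (ε : A →+* R) (η : R →+* A) (hker : ∀ a ∈ RingHom.ker ε, IsNilpotent a)
    (hsec : ε.comp η = RingHom.id R) (a : A) :
    IsNilpotent (a - η (ε a)) :=
  hker _ <| by rw [RingHom.mem_ker, map_sub, ← RingHom.comp_apply, hsec, RingHom.id_apply, sub_self]

theorem dense_units_of_section_general (A R : Type*)
    [CommRing A] [TopologicalSpace A] [IsTopologicalRing A]
    [CommRing R] [TopologicalSpace R]
    (ε : A →+* R) (η : R →+* A) (hη : Continuous η)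
    (hker : ∀ a ∈ RingHom.ker ε, IsNilpotent a)
    (hsec : ε.comp η = RingHom.id R)
    (hdense : Dense {r : R | IsUnit r}) :
    Dense {a : A | IsUnit a} := by
  intro a
  have hn := ε.isNilpotent_sub_map_of_comp_eq_id η hker hsec a
  let f : R → A := fun r => η r + (a - η (ε a))
  have hf : Continuous f := hη.add continuous_const
  have hfa : f (ε a) = a := add_sub_cancel _ _
  have hunits : f '' {r | IsUnit r} ⊆ {a | IsUnit a} := by
    rintro _ ⟨r, hr, rfl⟩
    exact hn.isUnit_add_left_of_commute (hr.map η) (Commute.all _ _)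
  exact hfa ▸ closure_mono hunits (mem_closure_image hf.continuousAt (hdense (ε a)))

/-- **(Lemma 2.2, abstract form.)** Let `A` and `R` be commutative unital topological rings,
`ε : A → R` a ring homomorphism whose kernel consists of nilpotent elements, and
`η : R → A` a continuous ring homomorphism with `ε ∘ η = id`. If the units of `R` are dense
in `R`, then the units of `A` are dense in `A`. -/
theorem dense_units_of_section (A R : Type*)
    [CommRing A] [TopologicalSpace A] [IsTopologicalRing A]
    [CommRing R] [TopologicalSpace R] [IsTopologicalRing R]
    (ε : A →+* R) (η : R →+* A) (hη : Continuous η)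
    (hker : ∀ a ∈ RingHom.ker ε, IsNilpotent a)
    (hsec : ε.comp η = RingHom.id R)
    (hdense : Dense {r : R | IsUnit r}) :
    Dense {a : A | IsUnit a} :=
  dense_units_of_section_general A R ε η hη hker hsec hdense
end

section
/- Let x₀ ∈ ℝ^m and N ∈ ℕ. Every ℝ-algebra homomorphism a : C^∞_{x₀} → λ_N from the ring of germs at x₀ of smooth real-valued functions to the Grassmann algebra λ_N satisfies ε(a(f)) = f(x₀) for every germ f, where ε : λ_N → ℝ is the augmentation. -/
/-!
`ε ∘ a` is an `ℝ`-algebra homomorphism `C^∞_{x₀} → ℝ`. A germ not vanishing at `x₀` is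
invertible, its reciprocal being smooth near `x₀`. Hence for any such character `χ`, the germ
`f - χ f` is killed by `χ`, so it is not a unit, so it vanishes at `x₀`: `χ` is evaluation at `x₀`.
-/

open Filter Topology

/-- The canonical `ℝ`-algebra structure on the ring of germs of `A`-valued functions,
where `A` is an `ℝ`-algebra. -/
noncomputable instance Filter.Germ.instAlgebraReal {α : Type*} (l : Filter α) (A : Type*)
    [Semiring A] [Algebra ℝ A] : Algebra ℝ (Filter.Germ l A) :=
  Algebra.ofModule
    (fun r x y => x.inductionOn fun f => y.inductionOn fun g => by
      rw [← Filter.Germ.coe_smul, ← Filter.Germ.coe_mul, ← Filter.Germ.coe_mul,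
        ← Filter.Germ.coe_smul]
      exact congrArg _ (funext fun z => smul_mul_assoc r (f z) (g z)))
    (fun r x y => x.inductionOn fun f => y.inductionOn fun g => by
      rw [← Filter.Germ.coe_smul, ← Filter.Germ.coe_mul, ← Filter.Germ.coe_mul,
        ← Filter.Germ.coe_smul]
      exact congrArg _ (funext fun z => mul_smul_comm r (f z) (g z)))

/-- `C^∞_x`: the `ℝ`-algebra of germs at `x` of smooth (`C^∞`) real-valued functions
defined on open neighbourhoods of `x` in `ℝ^n`. -/
noncomputable def SmoothGermAt (n : ℕ) (x : Fin n → ℝ) :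
    Subalgebra ℝ (Filter.Germ (𝓝 x) ℝ) where
  carrier := {φ | ∃ f : (Fin n → ℝ) → ℝ,
    (∃ U : Set (Fin n → ℝ), IsOpen U ∧ x ∈ U ∧ ContDiffOn ℝ (⊤ : ℕ∞) f U) ∧ φ = ↑f}
  mul_mem' := by
    rintro φ ψ ⟨f, ⟨U, hU, hxU, hf⟩, rfl⟩ ⟨g, ⟨V, hV, hxV, hg⟩, rfl⟩
    exact ⟨f * g, ⟨U ∩ V, hU.inter hV, ⟨hxU, hxV⟩,
      (hf.mono Set.inter_subset_left).mul (hg.mono Set.inter_subset_right)⟩,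
      (Filter.Germ.coe_mul f g).symm ▸ rfl⟩
  add_mem' := by
    rintro φ ψ ⟨f, ⟨U, hU, hxU, hf⟩, rfl⟩ ⟨g, ⟨V, hV, hxV, hg⟩, rfl⟩
    exact ⟨f + g, ⟨U ∩ V, hU.inter hV, ⟨hxU, hxV⟩,
      (hf.mono Set.inter_subset_left).add (hg.mono Set.inter_subset_right)⟩,
      (Filter.Germ.coe_add f g).symm ▸ rfl⟩
  algebraMap_mem' := by
    intro c
    refine ⟨fun _ => c, ⟨Set.univ, isOpen_univ, trivial, contDiffOn_const⟩, ?_⟩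
    show c • (1 : Filter.Germ (𝓝 x) ℝ) = _
    rw [show (1 : Filter.Germ (𝓝 x) ℝ) = ((fun _ => (1:ℝ)) : (Fin n → ℝ) → ℝ) from rfl,
      ← Filter.Germ.coe_smul]
    exact congrArg _ (funext fun z => by simp [smul_eq_mul])

/-- Evaluation of a smooth germ at its base point, as a ring homomorphism. -/
noncomputable def SmoothGermAt.evalHom (n : ℕ) (x : Fin n → ℝ) :
    SmoothGermAt n x →+* ℝ :=
  (Filter.Germ.valueRingHom).comp (Subalgebra.val _).toRingHom

/-- The maximal ideal `m_x` of germs vanishing at `x`. -/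
noncomputable def SmoothGermAt.mIdeal (n : ℕ) (x : Fin n → ℝ) :
    Ideal (SmoothGermAt n x) :=
  RingHom.ker (SmoothGermAt.evalHom n x)

theorem AlgHom.eq_of_isUnit_of_apply_ne_zero {K A : Type*} [Field K] [Ring A] [Algebra K A]
    {ψ : A →ₐ[K] K} (hψ : ∀ a, ψ a ≠ 0 → IsUnit a) (φ : A →ₐ[K] K) : φ = ψ := by
  ext a
  set b := a - algebraMap K A (φ a)
  have hφb : φ b = 0 := by simp [b]
  have hψb : ψ b = 0 := by
    by_contra h
    simpa [hφb] using (hψ b h).map φ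
  rw [map_sub, AlgHom.commutes, sub_eq_zero] at hψb
  exact hψb.symm

noncomputable def SmoothGermAt.evalAlgHom (n : ℕ) (x : Fin n → ℝ) : SmoothGermAt n x →ₐ[ℝ] ℝ :=
  { SmoothGermAt.evalHom n x with
    commutes' := fun r => by
      change Germ.value (r • (1 : Germ (𝓝 x) ℝ)) = r
      exact mul_one r }

theorem SmoothGermAt.isUnit_of_value_ne_zero {n : ℕ} {x : Fin n → ℝ} (f : SmoothGermAt n x)
    (hf : (f : Germ (𝓝 x) ℝ).value ≠ 0) : IsUnit f := by
  obtain ⟨g, ⟨U, hU, hxU, hg⟩, hfg⟩ := f.2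
  rw [hfg, Germ.value_ofFun] at hf
  set V := U ∩ g ⁻¹' {0}ᶜ
  have hV : IsOpen V := hg.continuousOn.isOpen_inter_preimage hU isOpen_compl_singleton
  let f' : SmoothGermAt n x :=
    ⟨↑g⁻¹, g⁻¹, ⟨V, hV, ⟨hxU, hf⟩, (hg.mono Set.inter_subset_left).inv fun _ hz => hz.2⟩, rfl⟩
  refine .of_mul_eq_one f' (Subtype.ext ?_)
  change (f : Germ (𝓝 x) ℝ) * ↑g⁻¹ = 1
  rw [hfg, ← Germ.coe_mul]
  exact Germ.coe_eq.mpr <|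
    eventually_of_mem (hV.mem_nhds ⟨hxU, hf⟩) fun z hz => mul_inv_cancel₀ hz.2

/-- **(Part of the proof of Lemma 3.11.)** For every `ℝ`-algebra homomorphism `a` from the
algebra `C^∞_{x₀}` of germs at `x₀ ∈ ℝ^m` of smooth real-valued functions to the Grassmann
algebra `λ_N = ExteriorAlgebra ℝ (Fin N → ℝ)`, one has `ε (a f) = f (x₀)` for every germ `f`,
where `ε` is the augmentation `ExteriorAlgebra.algebraMapInv`. -/
theorem augmentation_algHom_smoothGermAt_eq_value (m N : ℕ) (x₀ : Fin m → ℝ)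
    (a : SmoothGermAt m x₀ →ₐ[ℝ] ExteriorAlgebra ℝ (Fin N → ℝ))
    (f : SmoothGermAt m x₀) :
    ExteriorAlgebra.algebraMapInv (a f) =
      Filter.Germ.value (f : Filter.Germ (𝓝 x₀) ℝ) := by
  have hε : ExteriorAlgebra.algebraMapInv.comp a = SmoothGermAt.evalAlgHom m x₀ :=
    AlgHom.eq_of_isUnit_of_apply_ne_zero SmoothGermAt.isUnit_of_value_ne_zero _
  exact DFunLike.congr_fun hε f
end

section
/- Let x₀ ∈ ℝ^m and N ∈ ℕ. If a, b : C^∞_{x₀} → λ_N are two ℝ-algebra homomorphisms from the ring of germs at x₀ of smooth real-valued functions to the Grassmann algebra λ_N which agree on the germs at x₀ of the m coordinate functions y ↦ y_i (i = 1, …, m), then a = b. -/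
open Filter Topology

/-- The germ at `x₀` of the `i`-th coordinate function `y ↦ y i`, as an element of `C^∞_{x₀}`. -/
noncomputable def coordFunGermAt (m : ℕ) (x₀ : Fin m → ℝ) (i : Fin m) : SmoothGermAt m x₀ :=
  ⟨(↑(fun y : Fin m → ℝ => y i) : Filter.Germ (𝓝 x₀) ℝ),
    ⟨fun y => y i, ⟨Set.univ, isOpen_univ, trivial,
      (ContinuousLinearMap.proj (R := ℝ) (φ := fun _ : Fin m => ℝ) i).contDiff.contDiffOn⟩,
      rfl⟩⟩

/-!
A character of `C^∞_x` is evaluation at `x`, because a germ with nonzero value at `x` is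
invertible. Hence `ε ∘ a = ε ∘ b = ev_x`, so `a` and `b` map the maximal ideal `𝔪` into the
augmentation ideal `ker ε ⊆ ⨁_{k ≥ 1} ⋀^k ℝ^N`, whose `(N+1)`-st power vanishes. By Hadamard's
lemma `𝔪` is generated by the `y_i - x_i`, so every germ is congruent modulo `𝔪^(N+1)` to a
polynomial in the coordinate germs, on which `a` and `b` agree.
-/

open scoped ContDiff

universe u

theorem AlgHom.apply_mem_pow {R A B : Type*} [CommSemiring R] [CommSemiring A] [Semiring B]
    [Algebra R A] [Algebra R B] (f : A →ₐ[R] B) {I : Ideal A} {J : Submodule R B}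
    (hIJ : ∀ x ∈ I, f x ∈ J) {k : ℕ} (hk : k ≠ 0) {x : A} (hx : x ∈ I ^ k) : f x ∈ J ^ k := by
  have hx' : x ∈ (I.restrictScalars R) ^ k := by
    rw [← Submodule.restrictScalars_pow hk]
    exact hx
  have := Submodule.mem_map_of_mem (f := f.toLinearMap) hx'
  rw [Submodule.map_pow] at this
  exact pow_le_pow_left' (Submodule.map_le_iff_le_comap.mpr hIJ) k this

namespace ExteriorAlgebra

variable (R M : Type*) [CommRing R] [AddCommGroup M] [Module R M]

def degreeGE (k : ℕ) : Submodule R (ExteriorAlgebra R M) :=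
  ⨆ i, ⋀[R]^(k + i) M

theorem degreeGE_zero : degreeGE R M 0 = ⊤ := by
  simpa [degreeGE] using CliffordAlgebra.iSup_ι_range_eq_top (0 : QuadraticForm R M)

theorem degreeGE_mul_degreeGE_le (k l : ℕ) :
    degreeGE R M k * degreeGE R M l ≤ degreeGE R M (k + l) := by
  simp only [degreeGE, Submodule.iSup_mul, Submodule.mul_iSup, iSup_le_iff, ← pow_add]
  intro i j
  exact le_iSup_of_le (i + j) (le_of_eq (by congr 1; omega))

theorem degreeGE_one_pow_le (k : ℕ) : degreeGE R M 1 ^ k ≤ degreeGE R M k := by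
  induction k with
  | zero => simp [degreeGE_zero]
  | succ k ih =>
    rw [pow_succ', add_comm]
    exact (mul_le_mul' le_rfl ih).trans (degreeGE_mul_degreeGE_le R M 1 k)

variable {R M} in
theorem sub_algebraMap_algebraMapInv_mem_degreeGE_one (x : ExteriorAlgebra R M) :
    x - algebraMap R _ (algebraMapInv x) ∈ degreeGE R M 1 := by
  induction x using ExteriorAlgebra.induction with
  | algebraMap r => simp [algebraMap_leftInverse M r]
  | ι v =>
    have hε : algebraMapInv (ι R v) = 0 := by simp [algebraMapInv]
    rw [hε, map_zero, sub_zero]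
    exact Submodule.mem_iSup_of_mem 0 (by simp)
  | mul x y hx hy =>
    have key : x * y - algebraMap R _ (algebraMapInv (x * y)) =
        x * (y - algebraMap R _ (algebraMapInv y)) +
          algebraMapInv y • (x - algebraMap R _ (algebraMapInv x)) := by
      rw [map_mul, map_mul, Algebra.smul_def, mul_sub, mul_sub,
        Algebra.commutes (algebraMapInv y) x, Algebra.commutes (algebraMapInv x)]
      abel
    rw [key]
    refine Submodule.add_mem _ ?_ (Submodule.smul_mem _ _ hx)
    have hx' : x ∈ degreeGE R M 0 := degreeGE_zero R M ▸ Submodule.mem_top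
    simpa using degreeGE_mul_degreeGE_le R M 0 1 (Submodule.mul_mem_mul hx' hy)
  | add x y hx hy =>
    rw [map_add, map_add, add_sub_add_comm]
    exact Submodule.add_mem _ hx hy

theorem degreeGE_eq_bot {K V : Type*} [Field K] [AddCommGroup V] [Module K V]
    [FiniteDimensional K V] {k : ℕ} (hk : Module.finrank K V < k) : degreeGE K V k = ⊥ := by
  refine iSup_eq_bot.mpr fun i => Submodule.finrank_eq_zero.mp ?_
  rw [exteriorPower.finrank_eq]
  exact Nat.choose_eq_zero_of_lt (by omega)

end ExteriorAlgebra

section ParametricIntegral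

variable {E : Type u} [NormedAddCommGroup E] [NormedSpace ℝ E] [ProperSpace E]

theorem hasFDerivAt_intervalIntegral_of_contDiff {F : Type*} [NormedAddCommGroup F]
    [NormedSpace ℝ F] [CompleteSpace F] {h : ℝ × E → F} (hh : ContDiff ℝ 1 h) (a b : ℝ)
    (y₀ : E) :
    HasFDerivAt (fun y => ∫ t in a..b, h (t, y))
      (∫ t in a..b, fderiv ℝ h (t, y₀) ∘L ContinuousLinearMap.inr ℝ ℝ E) y₀ := by
  have hcont' : Continuous fun p => fderiv ℝ h p ∘L ContinuousLinearMap.inr ℝ ℝ E :=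
    (hh.continuous_fderiv one_ne_zero).clm_comp continuous_const
  obtain ⟨C, hC⟩ := (isCompact_uIcc.prod (isCompact_closedBall y₀ 1)).exists_bound_of_continuousOn
    hcont'.continuousOn
  refine intervalIntegral.hasFDerivAt_integral_of_dominated_of_fderiv_le
    (bound := fun _ => C) (Metric.ball_mem_nhds y₀ one_pos)
    (Filter.Eventually.of_forall fun y =>
      (hh.continuous.comp (Continuous.prodMk_left y)).aestronglyMeasurable)
    ((hh.continuous.comp (Continuous.prodMk_left y₀)).intervalIntegrable _ _)
    (hcont'.comp (Continuous.prodMk_left y₀)).aestronglyMeasurable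
    (MeasureTheory.ae_of_all _ fun t ht y hy =>
      hC (t, y) ⟨Set.uIoc_subset_uIcc ht, Metric.ball_subset_closedBall hy⟩)
    intervalIntegrable_const
    (MeasureTheory.ae_of_all _ fun t _ y _ =>
      ((hh.differentiable one_ne_zero (t, y)).hasFDerivAt).comp y (hasFDerivAt_prodMk_right t y))

-- `E` and `F` share a universe because the induction passes from `F` to `E →L[ℝ] F`.
theorem contDiff_intervalIntegral {F : Type u} [NormedAddCommGroup F] [NormedSpace ℝ F]
    [CompleteSpace F] {h : ℝ × E → F} (hh : ContDiff ℝ ∞ h) (a b : ℝ) :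
    ContDiff ℝ ∞ fun y => ∫ t in a..b, h (t, y) := by
  refine contDiff_infty.mpr fun n => ?_
  induction n generalizing F with
  | zero =>
    exact contDiff_zero.mpr (intervalIntegral.continuous_parametric_intervalIntegral_of_continuous'
      (f := fun y t => h (t, y)) (hh.continuous.comp continuous_swap) a b)
  | succ n ih =>
    have hh1 : ContDiff ℝ 1 h := hh.of_le (by exact_mod_cast le_top)
    have hderiv := hasFDerivAt_intervalIntegral_of_contDiff hh1 a b
    rw [Nat.cast_add_one]
    refine contDiff_succ_iff_fderiv.mpr ⟨fun y => (hderiv y).differentiableAt, by simp, ?_⟩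
    rw [funext fun y => (hderiv y).fderiv]
    exact ih (((hh.fderiv_right (m := ∞) (by exact_mod_cast le_top))).clm_comp contDiff_const)

theorem ContDiff.exists_eq_add_apply_sub {F : Type u} [NormedAddCommGroup F] [NormedSpace ℝ F]
    [CompleteSpace F] {f : E → F} (hf : ContDiff ℝ ∞ f) (x₀ : E) :
    ∃ g : E → E →L[ℝ] F, ContDiff ℝ ∞ g ∧ ∀ y, f y = f x₀ + g y (y - x₀) := by
  have hf' : ContDiff ℝ ∞ (fderiv ℝ f) := hf.fderiv_right (m := ∞) (by exact_mod_cast le_top)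
  refine ⟨fun y => ∫ t in (0 : ℝ)..1, fderiv ℝ f (x₀ + t • (y - x₀)),
    contDiff_intervalIntegral (h := fun p : ℝ × E => fderiv ℝ f (x₀ + p.1 • (p.2 - x₀)))
      (hf'.comp (by fun_prop)) 0 1, fun y => ?_⟩
  have hint : IntervalIntegrable (fun t : ℝ => fderiv ℝ f (x₀ + t • (y - x₀)))
      MeasureTheory.volume 0 1 :=
    (hf'.continuous.comp (by fun_prop)).intervalIntegrable _ _
  have hTaylor := map_add_eq_sum_add_integral_iteratedFDeriv (n := 0) (x := x₀) (y := y - x₀)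
    fun t _ => (hf.of_le (by exact_mod_cast le_top)).contDiffAt
  simpa [iteratedFDeriv_one_apply, ContinuousLinearMap.intervalIntegral_apply hint] using hTaylor

end ParametricIntegral

theorem ContDiffOn.exists_contDiff_eventuallyEq {E F : Type*} [NormedAddCommGroup E]
    [NormedSpace ℝ E] [HasContDiffBump E] [NormedAddCommGroup F] [NormedSpace ℝ F]
    {f : E → F} {U : Set E} {x : E} {n : ℕ∞} (hf : ContDiffOn ℝ n f U) (hU : IsOpen U)
    (hx : x ∈ U) : ∃ g : E → F, ContDiff ℝ n g ∧ g =ᶠ[𝓝 x] f := by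
  obtain ⟨r, hr, hrU⟩ := Metric.nhds_basis_closedBall.mem_iff.mp (hU.mem_nhds hx)
  let c : ContDiffBump x := ⟨r / 2, r, half_pos hr, half_lt_self hr⟩
  refine ⟨fun y => c y • f y, contDiff_iff_contDiffAt.mpr fun y => ?_, ?_⟩
  · by_cases hy : y ∈ U
    · exact c.contDiffAt.smul (hf.contDiffAt (hU.mem_nhds hy))
    · have hc : y ∉ tsupport c := c.tsupport_eq ▸ fun h => hy (hrU h)
      exact (contDiffAt_const (c := (0 : F))).congr_of_eventuallyEq
        ((notMem_tsupport_iff_eventuallyEq.mp hc).mono fun z hz => by simp [hz])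
  · filter_upwards [c.eventuallyEq_one] with y hy
    simp [hy]

theorem Filter.Germ.algebraMap_real_apply {α A : Type*} (l : Filter α) [Semiring A]
    [Algebra ℝ A] (r : ℝ) :
    algebraMap ℝ (Filter.Germ l A) r = ↑(algebraMap ℝ A r) := by
  rw [Algebra.algebraMap_eq_smul_one, Algebra.algebraMap_eq_smul_one, Filter.Germ.const_smul]
  rfl

namespace SmoothGermAt

variable {n : ℕ} {x : Fin n → ℝ}

noncomputable def ofContDiff {f : (Fin n → ℝ) → ℝ} (hf : ContDiff ℝ ∞ f) : SmoothGermAt n x :=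
  ⟨f, f, ⟨Set.univ, isOpen_univ, trivial, hf.contDiffOn⟩, rfl⟩

theorem exists_eq_ofContDiff (φ : SmoothGermAt n x) :
    ∃ (f : (Fin n → ℝ) → ℝ) (hf : ContDiff ℝ ∞ f), φ = ofContDiff hf := by
  obtain ⟨_, ⟨f, ⟨U, hU, hxU, hf⟩, rfl⟩⟩ := φ
  obtain ⟨g, hg, hgf⟩ := hf.exists_contDiff_eventuallyEq hU hxU
  exact ⟨g, hg, Subtype.ext (Filter.Germ.coe_eq.mpr hgf.symm)⟩

@[simp]
theorem evalHom_algebraMap (r : ℝ) : evalHom n x (algebraMap ℝ _ r) = r := by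
  change ((algebraMap ℝ (Filter.Germ (𝓝 x) ℝ) r)).value = r
  rw [Filter.Germ.algebraMap_real_apply]
  rfl

@[simp]
theorem evalHom_coordFunGermAt (i : Fin n) : evalHom n x (coordFunGermAt n x i) = x i :=
  rfl

theorem isUnit_of_evalHom_ne_zero {φ : SmoothGermAt n x} (hφ : evalHom n x φ ≠ 0) :
    IsUnit φ := by
  obtain ⟨_, ⟨f, ⟨U, hU, hxU, hf⟩, rfl⟩⟩ := φ
  have hfx : f x ≠ 0 := hφ
  have hV : IsOpen (U ∩ f ⁻¹' {0}ᶜ) :=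
    hf.continuousOn.isOpen_inter_preimage hU isOpen_compl_singleton
  let ψ : SmoothGermAt n x := ⟨↑(fun y => (f y)⁻¹), fun y => (f y)⁻¹,
    ⟨_, hV, ⟨hxU, hfx⟩, (hf.mono Set.inter_subset_left).inv fun _ hy => hy.2⟩, rfl⟩
  refine IsUnit.of_mul_eq_one ψ (Subtype.ext (Filter.Germ.coe_eq.mpr ?_))
  filter_upwards [hV.mem_nhds ⟨hxU, hfx⟩] with y hy
  exact mul_inv_cancel₀ hy.2

theorem algHom_apply_eq_evalHom (χ : SmoothGermAt n x →ₐ[ℝ] ℝ) (φ : SmoothGermAt n x) :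
    χ φ = evalHom n x φ := by
  by_contra hne
  have hunit : IsUnit (φ - algebraMap ℝ _ (χ φ)) :=
    isUnit_of_evalHom_ne_zero (by rwa [map_sub, evalHom_algebraMap, sub_ne_zero, ne_comm])
  simpa using hunit.map χ

noncomputable def centeredCoord (i : Fin n) : SmoothGermAt n x :=
  coordFunGermAt n x i - algebraMap ℝ _ (x i)

theorem centeredCoord_mem_mIdeal (i : Fin n) : centeredCoord i ∈ mIdeal n x :=
  RingHom.mem_ker.mpr (by simp [centeredCoord])

theorem centeredCoord_mem_adjoin (i : Fin n) :
    centeredCoord i ∈ Algebra.adjoin ℝ (Set.range (coordFunGermAt n x)) :=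
  sub_mem (Algebra.subset_adjoin ⟨i, rfl⟩) (Subalgebra.algebraMap_mem _ _)

theorem coe_sum_ofContDiff_mul_centeredCoord {g : Fin n → (Fin n → ℝ) → ℝ}
    (hg : ∀ i, ContDiff ℝ ∞ (g i)) :
    ((∑ i, ofContDiff (hg i) * centeredCoord i : SmoothGermAt n x) : Filter.Germ (𝓝 x) ℝ) =
      ↑(fun y => ∑ i, g i y * (y i - x i)) := by
  push_cast [centeredCoord, Filter.Germ.algebraMap_real_apply]
  rw [← Filter.Germ.coe_coeRingHom, ← Finset.sum_fn, map_sum]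
  rfl

theorem mIdeal_eq_span_centeredCoord :
    mIdeal n x = Ideal.span (Set.range (centeredCoord (x := x))) := by
  refine le_antisymm (fun φ hφ => ?_) (Ideal.span_le.mpr ?_)
  · obtain ⟨f, hf, rfl⟩ := exists_eq_ofContDiff φ
    obtain ⟨g, hg, hfg⟩ := hf.exists_eq_add_apply_sub x
    have hfx : f x = 0 := hφ
    have hgi : ∀ i, ContDiff ℝ ∞ fun y => g y (Pi.single i 1) :=
      fun i => hg.clm_apply contDiff_const
    refine Ideal.mem_span_range_iff_exists_fun.mpr ⟨fun i => ofContDiff (hgi i), Subtype.ext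
      ((coe_sum_ofContDiff_mul_centeredCoord hgi).trans (congrArg _ (funext fun y => ?_)))⟩
    rw [hfg y, hfx, zero_add]
    conv_rhs => rw [pi_eq_sum_univ' (y - x), map_sum]
    simp [mul_comm]
  · rintro _ ⟨i, rfl⟩
    exact centeredCoord_mem_mIdeal i

theorem exists_sub_mem_mIdeal_pow (k : ℕ) (φ : SmoothGermAt n x) :
    ∃ p ∈ Algebra.adjoin ℝ (Set.range (coordFunGermAt n x)), φ - p ∈ mIdeal n x ^ k := by
  induction k generalizing φ with
  | zero => exact ⟨0, zero_mem _, by simp⟩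
  | succ k ih =>
    have hφ : φ - algebraMap ℝ _ (evalHom n x φ) ∈ mIdeal n x := RingHom.mem_ker.mpr (by simp)
    rw [mIdeal_eq_span_centeredCoord] at hφ
    obtain ⟨c, hc⟩ := Ideal.mem_span_range_iff_exists_fun.mp hφ
    choose p hp hcp using fun i => ih (c i)
    refine ⟨algebraMap ℝ _ (evalHom n x φ) + ∑ i, p i * centeredCoord i,
      add_mem (Subalgebra.algebraMap_mem _ _)
        (sum_mem fun i _ => mul_mem (hp i) (centeredCoord_mem_adjoin i)), ?_⟩
    have hsplit : φ - (algebraMap ℝ _ (evalHom n x φ) + ∑ i, p i * centeredCoord i) =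
        ∑ i, (c i - p i) * centeredCoord i := by
      simp only [sub_mul, Finset.sum_sub_distrib, hc]
      ring
    rw [hsplit, pow_succ]
    exact sum_mem fun i _ => Ideal.mul_mem_mul (hcp i) (centeredCoord_mem_mIdeal i)

theorem algHom_apply_eq_zero_of_mem_mIdeal_pow {V : Type*} [AddCommGroup V] [Module ℝ V]
    [FiniteDimensional ℝ V] (a : SmoothGermAt n x →ₐ[ℝ] ExteriorAlgebra ℝ V) {k : ℕ}
    (hk : Module.finrank ℝ V < k) {φ : SmoothGermAt n x} (hφ : φ ∈ mIdeal n x ^ k) : a φ = 0 := by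
  have hmaps : ∀ ψ ∈ mIdeal n x, a ψ ∈ ExteriorAlgebra.degreeGE ℝ V 1 := fun ψ hψ => by
    have hε : ExteriorAlgebra.algebraMapInv (a ψ) = 0 :=
      (algHom_apply_eq_evalHom (ExteriorAlgebra.algebraMapInv.comp a) ψ).trans hψ
    simpa [hε] using ExteriorAlgebra.sub_algebraMap_algebraMapInv_mem_degreeGE_one (a ψ)
  rw [← Submodule.mem_bot ℝ, ← ExteriorAlgebra.degreeGE_eq_bot hk]
  exact ExteriorAlgebra.degreeGE_one_pow_le ℝ V k (a.apply_mem_pow hmaps (by omega) hφ)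

end SmoothGermAt

/-- **(Uniqueness in Lemma 3.11.)** Two `ℝ`-algebra homomorphisms from the algebra `C^∞_{x₀}`
of germs at `x₀ ∈ ℝ^m` of smooth real-valued functions to the Grassmann algebra
`λ_N = ExteriorAlgebra ℝ (Fin N → ℝ)` which agree on the germs of the `m` coordinate
functions `y ↦ y i` are equal. -/
theorem algHom_smoothGermAt_ext (m N : ℕ) (x₀ : Fin m → ℝ)
    (a b : SmoothGermAt m x₀ →ₐ[ℝ] ExteriorAlgebra ℝ (Fin N → ℝ))
    (h : ∀ i : Fin m, a (coordFunGermAt m x₀ i) = b (coordFunGermAt m x₀ i)) :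
    a = b := by
  ext φ
  obtain ⟨p, hp, hφp⟩ := SmoothGermAt.exists_sub_mem_mIdeal_pow (N + 1) φ
  have hab : a p = b p :=
    Algebra.adjoin_le (S := AlgHom.equalizer a b) (Set.range_subset_iff.mpr h) hp
  have hk : Module.finrank ℝ (Fin N → ℝ) < N + 1 := by simp
  have ha := SmoothGermAt.algHom_apply_eq_zero_of_mem_mIdeal_pow a hk hφp
  have hb := SmoothGermAt.algHom_apply_eq_zero_of_mem_mIdeal_pow b hk hφp
  rw [map_sub, sub_eq_zero] at ha hb
  rw [ha, hb, hab]
end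

section
/- Fix an open set U ⊆ ℝ^n and q ∈ ℕ, and let f be a C^∞ map from U to the Grassmann algebra λ_q. If for every y ∈ U the germ of f at y lies in m_y^{q+1}, the (q+1)-st power of the two-sided ideal m_y = {h ∈ A_y : ε(h(y)) = 0} of the algebra A_y of germs at y of smooth λ_q-valued maps, then f = 0 identically on U. -/
set_option synthInstance.maxHeartbeats 1000000
set_option maxHeartbeats 1000000

open Filter Topology

/-- The Grassmann algebra `λ_q = R[θ_1, …, θ_q]` over `ℝ`. -/
abbrev GrassmannAlg (q : ℕ) : Type := ExteriorAlgebra ℝ (Fin q → ℝ)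

/-- `f : ℝ^n → λ_q` is `C^∞` on `U`.  Since `λ_q` is a finite-dimensional real vector space
(of dimension `2 ^ q`), smoothness with respect to any norm on `λ_q` (all of which are
equivalent) amounts to the existence of a finite decomposition `f = ∑ j, g j • b j` with
`C^∞` real-valued coefficient functions `g j` and constant vectors `b j ∈ λ_q`;
we take this as the definition. -/
def ContDiffOnG {n q : ℕ} (f : (Fin n → ℝ) → GrassmannAlg q) (U : Set (Fin n → ℝ)) : Prop :=
  ∃ (k : ℕ) (g : Fin k → (Fin n → ℝ) → ℝ) (b : Fin k → GrassmannAlg q),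
    (∀ j, ContDiffOn ℝ (⊤ : ℕ∞) (g j) U) ∧ ∀ y ∈ U, f y = ∑ j, g j y • b j

theorem ContDiffOnG.mul {n q : ℕ} {f g : (Fin n → ℝ) → GrassmannAlg q}
    {U V : Set (Fin n → ℝ)} (hf : ContDiffOnG f U) (hg : ContDiffOnG g V) :
    ContDiffOnG (f * g) (U ∩ V) := by
  obtain ⟨k₁, g₁, b₁, hg₁, hfd⟩ := hf
  obtain ⟨k₂, g₂, b₂, hg₂, hgd⟩ := hg
  refine ⟨k₁ * k₂,
    fun p y => g₁ (finProdFinEquiv.symm p).1 y * g₂ (finProdFinEquiv.symm p).2 y,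
    fun p => b₁ (finProdFinEquiv.symm p).1 * b₂ (finProdFinEquiv.symm p).2, ?_, ?_⟩
  · intro p
    exact ((hg₁ _).mono Set.inter_subset_left).mul ((hg₂ _).mono Set.inter_subset_right)
  · intro y hy
    have key : ∀ pr : Fin k₁ × Fin k₂,
        (g₁ pr.1 y • b₁ pr.1) * (g₂ pr.2 y • b₂ pr.2)
          = (g₁ pr.1 y * g₂ pr.2 y) • (b₁ pr.1 * b₂ pr.2) := by
      intro pr
      rw [smul_mul_assoc, mul_smul_comm, smul_smul]
    calc (f * g) y = f y * g y := rfl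
      _ = (∑ j, g₁ j y • b₁ j) * (∑ j, g₂ j y • b₂ j) := by rw [hfd y hy.1, hgd y hy.2]
      _ = ∑ j : Fin k₁, ∑ j' : Fin k₂, (g₁ j y • b₁ j) * (g₂ j' y • b₂ j') :=
        Finset.sum_mul_sum _ _ _ _
      _ = ∑ pr : Fin k₁ × Fin k₂, (g₁ pr.1 y • b₁ pr.1) * (g₂ pr.2 y • b₂ pr.2) :=
        (Fintype.sum_prod_type
          (fun pr : Fin k₁ × Fin k₂ => (g₁ pr.1 y • b₁ pr.1) * (g₂ pr.2 y • b₂ pr.2))).symm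
      _ = ∑ pr : Fin k₁ × Fin k₂, (g₁ pr.1 y * g₂ pr.2 y) • (b₁ pr.1 * b₂ pr.2) :=
        Finset.sum_congr rfl fun pr _ => key pr
      _ = ∑ p : Fin (k₁ * k₂), (g₁ (finProdFinEquiv.symm p).1 y * g₂ (finProdFinEquiv.symm p).2 y)
            • (b₁ (finProdFinEquiv.symm p).1 * b₂ (finProdFinEquiv.symm p).2) :=
        (Equiv.sum_comp finProdFinEquiv.symm fun pr =>
          (g₁ pr.1 y * g₂ pr.2 y) • (b₁ pr.1 * b₂ pr.2)).symm

theorem ContDiffOnG.add {n q : ℕ} {f g : (Fin n → ℝ) → GrassmannAlg q}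
    {U V : Set (Fin n → ℝ)} (hf : ContDiffOnG f U) (hg : ContDiffOnG g V) :
    ContDiffOnG (f + g) (U ∩ V) := by
  obtain ⟨k₁, g₁, b₁, hg₁, hfd⟩ := hf
  obtain ⟨k₂, g₂, b₂, hg₂, hgd⟩ := hg
  refine ⟨k₁ + k₂, Fin.append g₁ g₂, Fin.append b₁ b₂, ?_, ?_⟩
  · intro j
    refine Fin.addCases (fun i => ?_) (fun i => ?_) j
    · rw [Fin.append_left]
      exact (hg₁ i).mono Set.inter_subset_left
    · rw [Fin.append_right]
      exact (hg₂ i).mono Set.inter_subset_right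
  · intro y hy
    rw [Pi.add_apply, hfd y hy.1, hgd y hy.2, Fin.sum_univ_add]
    congr 1
    · exact Finset.sum_congr rfl fun i _ => by rw [Fin.append_left, Fin.append_left]
    · exact Finset.sum_congr rfl fun i _ => by rw [Fin.append_right, Fin.append_right]

theorem ContDiffOnG.const {n q : ℕ} (c : GrassmannAlg q) :
    ContDiffOnG (fun _ : Fin n → ℝ => c) Set.univ := by
  refine ⟨1, fun _ _ => 1, fun _ => c, fun _ => contDiffOn_const, fun y _ => ?_⟩
  simp

/-- `A_x`: the `ℝ`-algebra of germs at `x ∈ ℝ^n` of `C^∞` maps from open neighbourhoods of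
`x` to the Grassmann algebra `λ_q`; this is the stalk at `x` of the structure sheaf
`C^∞ ⊗ ⋀ (ℝ^q)*` of a Berezin–Kostant–Leites superdomain. -/
noncomputable def SmoothGermAtG (n q : ℕ) (x : Fin n → ℝ) :
    Subalgebra ℝ (Filter.Germ (𝓝 x) (GrassmannAlg q)) where
  carrier := {φ | ∃ f : (Fin n → ℝ) → GrassmannAlg q,
    (∃ U : Set (Fin n → ℝ), IsOpen U ∧ x ∈ U ∧ ContDiffOnG f U) ∧ φ = ↑f}
  mul_mem' := by
    rintro φ ψ ⟨f, ⟨U, hU, hxU, hf⟩, rfl⟩ ⟨g, ⟨V, hV, hxV, hg⟩, rfl⟩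
    exact ⟨f * g, ⟨U ∩ V, hU.inter hV, ⟨hxU, hxV⟩, hf.mul hg⟩,
      (Filter.Germ.coe_mul f g).symm ▸ rfl⟩
  add_mem' := by
    rintro φ ψ ⟨f, ⟨U, hU, hxU, hf⟩, rfl⟩ ⟨g, ⟨V, hV, hxV, hg⟩, rfl⟩
    exact ⟨f + g, ⟨U ∩ V, hU.inter hV, ⟨hxU, hxV⟩, hf.add hg⟩,
      (Filter.Germ.coe_add f g).symm ▸ rfl⟩
  algebraMap_mem' := by
    intro c
    refine ⟨fun _ => algebraMap ℝ (GrassmannAlg q) c,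
      ⟨Set.univ, isOpen_univ, trivial, ContDiffOnG.const _⟩, ?_⟩
    show c • (1 : Filter.Germ (𝓝 x) (GrassmannAlg q)) = _
    rw [show (1 : Filter.Germ (𝓝 x) (GrassmannAlg q))
        = ((fun _ => (1 : GrassmannAlg q)) : (Fin n → ℝ) → GrassmannAlg q) from rfl,
      ← Filter.Germ.coe_smul]
    exact congrArg _ (funext fun z => (Algebra.algebraMap_eq_smul_one c).symm)

/-- The two-sided ideal `m_x = {h ∈ A_x ∣ ε (h x) = 0}` of the algebra `A_x` of germs at `x`
of smooth `λ_q`-valued maps, as an `ℝ`-submodule of `A_x` (its powers, formed via the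
product of submodules of the algebra `A_x`, coincide with the powers of the two-sided
ideal `m_x`). -/
noncomputable def mGSub (n q : ℕ) (x : Fin n → ℝ) : Submodule ℝ (SmoothGermAtG n q x) where
  carrier := {h | ExteriorAlgebra.algebraMapInv
    (Filter.Germ.value (h : Filter.Germ (𝓝 x) (GrassmannAlg q))) = 0}
  zero_mem' := by
    show ExteriorAlgebra.algebraMapInv
      (Filter.Germ.value (0 : Filter.Germ (𝓝 x) (GrassmannAlg q))) = 0
    have h0 : Filter.Germ.value (0 : Filter.Germ (𝓝 x) (GrassmannAlg q)) = 0 := rfl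
    rw [h0, map_zero]
  add_mem' := by
    intro a b ha hb
    show ExteriorAlgebra.algebraMapInv
      (Filter.Germ.value ((a : Filter.Germ (𝓝 x) (GrassmannAlg q))
        + (b : Filter.Germ (𝓝 x) (GrassmannAlg q)))) = 0
    have : Filter.Germ.value ((a : Filter.Germ (𝓝 x) (GrassmannAlg q))
        + (b : Filter.Germ (𝓝 x) (GrassmannAlg q)))
        = Filter.Germ.value (a : Filter.Germ (𝓝 x) (GrassmannAlg q))
          + Filter.Germ.value (b : Filter.Germ (𝓝 x) (GrassmannAlg q)) :=
      map_add Filter.Germ.valueAddHom _ _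
    rw [this, map_add, ha, hb, add_zero]
  smul_mem' := by
    intro r h hh
    show ExteriorAlgebra.algebraMapInv
      (Filter.Germ.value (r • (h : Filter.Germ (𝓝 x) (GrassmannAlg q)))) = 0
    have : Filter.Germ.value (r • (h : Filter.Germ (𝓝 x) (GrassmannAlg q)))
        = r • Filter.Germ.value (h : Filter.Germ (𝓝 x) (GrassmannAlg q)) :=
      map_smul (Filter.Germ.valueₗ (𝕜 := ℝ)) r _
    rw [this, map_smul, hh, smul_zero]

/-- The germ at `x` of the scalar coordinate function `y ↦ (y i - x i) · 1`, as an element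
of `A_x`. -/
noncomputable def evenCoordGermG (n q : ℕ) (x : Fin n → ℝ) (i : Fin n) :
    SmoothGermAtG n q x :=
  ⟨(↑(fun y : Fin n → ℝ => algebraMap ℝ (GrassmannAlg q) (y i - x i)) :
      Filter.Germ (𝓝 x) (GrassmannAlg q)),
    ⟨fun y => algebraMap ℝ (GrassmannAlg q) (y i - x i),
      ⟨Set.univ, isOpen_univ, trivial,
        ⟨1, fun _ y => y i - x i, fun _ => 1,
          fun _ => ((ContinuousLinearMap.proj (R := ℝ) (φ := fun _ : Fin n => ℝ) i).contDiff.sub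
            contDiff_const).contDiffOn,
          fun y _ => by simp [Algebra.algebraMap_eq_smul_one]⟩⟩, rfl⟩⟩

/-- The constant germ at `x` with value the odd generator `θ_j = ι (e j)`, as an element
of `A_x`. -/
noncomputable def oddCoordGermG (n q : ℕ) (x : Fin n → ℝ) (j : Fin q) :
    SmoothGermAtG n q x :=
  ⟨(↑(fun _ : Fin n → ℝ => ExteriorAlgebra.ι ℝ (Pi.single j (1 : ℝ) : Fin q → ℝ)) :
      Filter.Germ (𝓝 x) (GrassmannAlg q)),
    ⟨fun _ => ExteriorAlgebra.ι ℝ (Pi.single j (1 : ℝ) : Fin q → ℝ),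
      ⟨Set.univ, isOpen_univ, trivial, ContDiffOnG.const _⟩, rfl⟩⟩

/-!
Evaluation at `y` is an `ℝ`-algebra map `A_y → λ_q` carrying `m_y` into the augmentation ideal
`ker ε`. Every element of `ker ε` has the form `∑ θ_i a_i`, so `(ker ε) ^ (q + 1)` lies in
`⋀^(q+1) (ℝ^q) · λ_q = 0`; hence the value at `y` of a germ in `m_y ^ (q + 1)` vanishes.
-/

namespace ExteriorAlgebra

variable (R M : Type*) [CommRing R] [AddCommGroup M] [Module R M]

abbrev augmentationIdeal : Submodule R (ExteriorAlgebra R M) :=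
  LinearMap.ker (algebraMapInv : ExteriorAlgebra R M →ₐ[R] R).toLinearMap

variable {R M}

@[simp]
theorem algebraMapInv_ι (v : M) : algebraMapInv (ι R v) = 0 := by
  simp [algebraMapInv]

theorem sub_algebraMap_algebraMapInv_mem (x : ExteriorAlgebra R M) :
    x - algebraMap R _ (algebraMapInv x) ∈ LinearMap.range (ι R (M := M)) * ⊤ := by
  induction x using ExteriorAlgebra.induction with
  | algebraMap r => simp
  | ι v =>
    simpa using
      Submodule.mul_mem_mul (LinearMap.mem_range_self (ι R) v) (Submodule.mem_top (x := 1))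
  | mul a b ha hb =>
    have hsplit : a * b - algebraMap R _ (algebraMapInv (a * b)) =
        (a - algebraMap R _ (algebraMapInv a)) * b +
          algebraMapInv a • (b - algebraMap R _ (algebraMapInv b)) := by
      rw [map_mul, map_mul, Algebra.smul_def]
      noncomm_ring
    have hright : LinearMap.range (ι R (M := M)) * ⊤ * ⊤ ≤ LinearMap.range (ι R) * ⊤ := by
      rw [mul_assoc]
      exact mul_le_mul_right le_top _
    rw [hsplit]
    exact add_mem (hright (Submodule.mul_mem_mul ha Submodule.mem_top)) (Submodule.smul_mem _ _ hb)
  | add a b ha hb =>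
    convert add_mem ha hb using 1
    rw [map_add, map_add]
    abel

theorem augmentationIdeal_le_range_ι_mul_top :
    augmentationIdeal R M ≤ LinearMap.range (ι R (M := M)) * ⊤ := fun x hx => by
  simpa [show algebraMapInv x = 0 from hx] using sub_algebraMap_algebraMapInv_mem x

theorem top_mul_augmentationIdeal_le : ⊤ * augmentationIdeal R M ≤ augmentationIdeal R M :=
  Submodule.mul_le.2 fun a _ b hb => by simp_all

theorem augmentationIdeal_pow_le_exteriorPower_mul_top (n : ℕ) :
    augmentationIdeal R M ^ n ≤ ⋀[R]^n M * ⊤ := by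
  induction n with
  | zero => simp
  | succ n ih =>
    calc augmentationIdeal R M ^ (n + 1) = augmentationIdeal R M ^ n * augmentationIdeal R M :=
          pow_succ _ _
      _ ≤ ⋀[R]^n M * ⊤ * augmentationIdeal R M := mul_le_mul_left ih _
      _ ≤ ⋀[R]^n M * augmentationIdeal R M := by
          rw [mul_assoc]
          exact mul_le_mul_right top_mul_augmentationIdeal_le _
      _ ≤ ⋀[R]^n M * (LinearMap.range (ι R) * ⊤) :=
          mul_le_mul_right augmentationIdeal_le_range_ι_mul_top _
      _ = ⋀[R]^(n + 1) M * ⊤ := by rw [← mul_assoc, ← pow_succ]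

section Field

variable {K V : Type*} [Field K] [AddCommGroup V] [Module K V] [FiniteDimensional K V] {n : ℕ}

theorem exteriorPower_eq_bot_of_finrank_lt (hn : Module.finrank K V < n) : ⋀[K]^n V = ⊥ := by
  rw [← Submodule.finrank_eq_zero, exteriorPower.finrank_eq, Nat.choose_eq_zero_of_lt hn]

theorem augmentationIdeal_pow_eq_bot_of_finrank_lt (hn : Module.finrank K V < n) :
    augmentationIdeal K V ^ n = ⊥ :=
  le_bot_iff.1 <| (augmentationIdeal_pow_le_exteriorPower_mul_top n).trans_eq <| by
    rw [exteriorPower_eq_bot_of_finrank_lt hn, Submodule.bot_mul]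

end Field

end ExteriorAlgebra

noncomputable def Filter.Germ.valueAlgHom {X A : Type*} [TopologicalSpace X] {x : X} [Semiring A]
    [Algebra ℝ A] : Filter.Germ (𝓝 x) A →ₐ[ℝ] A where
  __ := Filter.Germ.valueRingHom
  commutes' r := (Algebra.algebraMap_eq_smul_one r).symm

noncomputable def SmoothGermAtG.value (n q : ℕ) (x : Fin n → ℝ) :
    SmoothGermAtG n q x →ₐ[ℝ] GrassmannAlg q :=
  Filter.Germ.valueAlgHom.comp (SmoothGermAtG n q x).val

theorem map_mGSub_le_augmentationIdeal (n q : ℕ) (x : Fin n → ℝ) :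
    (mGSub n q x).map (SmoothGermAtG.value n q x).toLinearMap ≤
      ExteriorAlgebra.augmentationIdeal ℝ (Fin q → ℝ) :=
  Submodule.map_le_iff_le_comap.2 fun _ h => h

/-- **(Lemma 3.14 (iii), specialized to `ℝ`.)** Let `U ⊆ ℝ^n` be open and `f : U → λ_q` a
`C^∞` map. If for every `y ∈ U` the germ of `f` at `y` lies in `m_y ^ (q + 1)`, the
`(q+1)`-st power of the two-sided ideal `m_y = {h ∈ A_y ∣ ε (h y) = 0}` of the algebra
`A_y` of germs at `y` of smooth `λ_q`-valued maps, then `f = 0` identically on `U`. -/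
theorem eq_zero_of_germ_mem_mG_pow (n q : ℕ) (U : Set (Fin n → ℝ)) (hU : IsOpen U)
    (f : (Fin n → ℝ) → GrassmannAlg q) (hf : ContDiffOnG f U)
    (h : ∀ y, ∀ hy : y ∈ U,
      (⟨(↑f : Filter.Germ (𝓝 y) (GrassmannAlg q)), f, ⟨U, hU, hy, hf⟩, rfl⟩ :
          SmoothGermAtG n q y) ∈
        (mGSub n q y ^ (q + 1) : Submodule ℝ (SmoothGermAtG n q y))) :
    ∀ y ∈ U, f y = 0 := by
  intro y hy
  have hvanish : (mGSub n q y ^ (q + 1)).map (SmoothGermAtG.value n q y).toLinearMap = ⊥ := by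
    rw [Submodule.map_pow, ← le_bot_iff,
      ← ExteriorAlgebra.augmentationIdeal_pow_eq_bot_of_finrank_lt (K := ℝ) (V := Fin q → ℝ)
        (n := q + 1) (by simp)]
    exact pow_le_pow_left' (map_mGSub_le_augmentationIdeal n q y) _
  exact (Submodule.mem_bot ℝ).1 (hvanish ▸ Submodule.mem_map_of_mem (h y hy))
end
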